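/- In the weak commutativity group χ(G), for all elements α₁, α₂ belonging to the subgroup L₁ and β₁, β₂ belonging to the subgroup L₂, one has [α₁·α₂, β₁·β₂] = [α₁,β₁]·[α₁,β₂]·[α₂,β₁]·[α₂,β₂]. -/

import Mathlib

open Subgroup
open scoped commutatorElement

/-- The weak commutativity relations inside the free product `G ∗ G`. -/
def chiRel (G : Type*) [Group G] : Subgroup (Monoid.Coprod G G) :=
  Subgroup.normalClosure
    {x | ∃ g : G, x = Monoid.Coprod.inl g * Monoid.Coprod.inr g *
      (Monoid.Coprod.inl g)⁻¹ * (Monoid.Coprod.inr g)⁻¹}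

instance chiRel_normal (G : Type*) [Group G] : (chiRel G).Normal :=
  Subgroup.normalClosure_normal

/-- The weak commutativity group `χ(G)`. -/
def Chi (G : Type*) [Group G] : Type _ := Monoid.Coprod G G ⧸ chiRel G

instance (G : Type*) [Group G] : Group (Chi G) :=
  inferInstanceAs (Group (Monoid.Coprod G G ⧸ chiRel G))

/-- The canonical map `G → χ(G)`, `g ↦ g`. -/
def chiIota1 (G : Type*) [Group G] : G →* Chi G :=
  (QuotientGroup.mk' (chiRel G)).comp Monoid.Coprod.inl

/-- The canonical map `G → χ(G)`, `g ↦ g^φ`. -/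
def chiIota2 (G : Type*) [Group G] : G →* Chi G :=
  (QuotientGroup.mk' (chiRel G)).comp Monoid.Coprod.inr

/-- `G₁ ≤ χ(G)`. -/
def chiG1 (G : Type*) [Group G] : Subgroup (Chi G) := (chiIota1 G).range

/-- `G₂ = G^φ ≤ χ(G)`. -/
def chiG2 (G : Type*) [Group G] : Subgroup (Chi G) := (chiIota2 G).range

/-- `L = ⟨g⁻¹ g^φ : g ∈ G⟩`. -/
def chiL (G : Type*) [Group G] : Subgroup (Chi G) :=
  Subgroup.closure {x | ∃ g : G, x = (chiIota1 G g)⁻¹ * chiIota2 G g}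

/-- `D = ⁅G₁, G₂⁆`. -/
def chiD (G : Type*) [Group G] : Subgroup (Chi G) := ⁅chiG1 G, chiG2 G⁆

/-- `L₁ = ⁅L, G₁⁆`. -/
def chiL1 (G : Type*) [Group G] : Subgroup (Chi G) := ⁅chiL G, chiG1 G⁆

/-- `L₂ = ⁅L, G₂⁆`. -/
def chiL2 (G : Type*) [Group G] : Subgroup (Chi G) := ⁅chiL G, chiG2 G⁆

/-- `R = ⁅⁅G₁, L⁆, G₂⁆`. -/
def chiR (G : Type*) [Group G] : Subgroup (Chi G) := ⁅⁅chiG1 G, chiL G⁆, chiG2 G⁆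

/-- `L₁₂ = ⁅L₁, L₂⁆`. -/
def chiL12 (G : Type*) [Group G] : Subgroup (Chi G) := ⁅chiL1 G, chiL2 G⁆

/-!
Each `g` commutes with `g^φ` in `χ(G)`; applied to `g`, `h` and `g⁻¹ h` this gives the symmetry
`⁅g, h^φ⁆ = ⁅g^φ, h⁆`. Hence `k` and `k^φ` act in the same way by conjugation on the generators
of `D = ⁅G₁, G₂⁆`, i.e. `D` centralizes `L`. Since `G₁` and `G₂` generate `χ(G)`, both `L` and `D`
are normal; modulo `D` the images of `G₁` and `G₂` commute and are therefore normal, so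
`⁅L₁, L₂⁆ ≤ ⁅G₁, G₂⁆ = D`. Thus every commutator of an element of `L₁` with one of `L₂` is
central in `L ⊇ L₁ ⊔ L₂`, which makes the commutator map `L₁ × L₂ → χ(G)` bimultiplicative.
-/

section GroupTheory

variable {W : Type*} [Group W]

theorem mul_commutatorElement_mul_inv (a b c : W) :
    c * ⁅a, b⁆ * c⁻¹ = ⁅c * a, b⁆ * ⁅c, b⁆⁻¹ :=
  eq_mul_inv_of_mul_eq (commutatorElement_mul_left_eq_conj_mul c a b).symm

theorem commutatorElement_eq_commutatorElement_of_commute {x y X Y : W}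
    (hx : Commute x X) (hy : Commute y Y) (hxy : Commute (x⁻¹ * y) (X⁻¹ * Y)) :
    ⁅x, Y⁆ = ⁅X, y⁆ := by
  have key : Y * x⁻¹ = X * x⁻¹ * y * X⁻¹ * Y * y⁻¹ := by
    calc Y * x⁻¹ = X * (X⁻¹ * Y * (x⁻¹ * y)) * y⁻¹ := by group
      _ = X * (x⁻¹ * y * (X⁻¹ * Y)) * y⁻¹ := by rw [hxy.eq]
      _ = X * x⁻¹ * y * X⁻¹ * Y * y⁻¹ := by group
  calc ⁅x, Y⁆ = x * (Y * x⁻¹) * Y⁻¹ := by rw [commutatorElement_def]; group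
    _ = x * X * x⁻¹ * y * X⁻¹ * (Y * y⁻¹ * Y⁻¹) := by rw [key]; group
    _ = ⁅X, y⁆ := by
      rw [hx.mul_inv_cancel, hy.symm.inv_right.mul_inv_cancel, commutatorElement_def]

theorem commutatorElement_mul_right_of_commute {a b c : W} (h : Commute b ⁅a, c⁆) :
    ⁅a, b * c⁆ = ⁅a, b⁆ * ⁅a, c⁆ := by
  rw [commutatorElement_mul_right_eq_mul_conj, mul_assoc _ b, mul_assoc, h.mul_inv_cancel]

theorem commutatorElement_mul_left_of_commute {a b c : W} (h : Commute a ⁅b, c⁆) :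
    ⁅a * b, c⁆ = ⁅b, c⁆ * ⁅a, c⁆ := by
  rw [commutatorElement_mul_left_eq_conj_mul, h.mul_inv_cancel]

theorem commutatorElement_mul_mul_of_commutator_le_centralizer {A B : Subgroup W}
    (hAB : ⁅A, B⁆ ≤ centralizer (A ⊔ B : Subgroup W)) {a₁ a₂ b₁ b₂ : W}
    (ha₁ : a₁ ∈ A) (ha₂ : a₂ ∈ A) (hb₁ : b₁ ∈ B) (hb₂ : b₂ ∈ B) :
    ⁅a₁ * a₂, b₁ * b₂⁆ = ⁅a₁, b₁⁆ * ⁅a₁, b₂⁆ * ⁅a₂, b₁⁆ * ⁅a₂, b₂⁆ := by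
  have central {a b : W} (ha : a ∈ A) (hb : b ∈ B) {x : W} (hx : x ∈ A ⊔ B) :
      Commute x ⁅a, b⁆ :=
    mem_centralizer_iff.mp (hAB (commutator_mem_commutator ha hb)) x hx
  have expand {a : W} (ha : a ∈ A) : ⁅a, b₁ * b₂⁆ = ⁅a, b₁⁆ * ⁅a, b₂⁆ :=
    commutatorElement_mul_right_of_commute (central ha hb₂ (mem_sup_right hb₁))
  have hb : b₁ * b₂ ∈ B := mul_mem hb₁ hb₂
  have ha₁b : ⁅a₁, b₁ * b₂⁆ ∈ A ⊔ B := commutator_le_sup A B (commutator_mem_commutator ha₁ hb)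
  calc ⁅a₁ * a₂, b₁ * b₂⁆ = ⁅a₂, b₁ * b₂⁆ * ⁅a₁, b₁ * b₂⁆ :=
        commutatorElement_mul_left_of_commute (central ha₂ hb (mem_sup_left ha₁))
    _ = ⁅a₁, b₁ * b₂⁆ * ⁅a₂, b₁ * b₂⁆ := (central ha₂ hb ha₁b).eq.symm
    _ = ⁅a₁, b₁⁆ * ⁅a₁, b₂⁆ * ⁅a₂, b₁⁆ * ⁅a₂, b₂⁆ := by rw [expand ha₁, expand ha₂, ← mul_assoc]

theorem Subgroup.commutator_normal_of_sup_eq_top {A B : Subgroup W} (hAB : A ⊔ B = ⊤) :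
    ⁅A, B⁆.Normal := by
  rw [← normalizer_eq_top_iff, eq_top_iff, ← hAB]
  exact sup_le (normalizer_commutator_ge_left A B) (normalizer_commutator_ge_right A B)

theorem Subgroup.normal_of_commutator_eq_bot_of_sup_eq_top {A B : Subgroup W}
    (hAB : ⁅A, B⁆ = ⊥) (hsup : A ⊔ B = ⊤) : A.Normal := by
  rw [← normalizer_eq_top_iff, eq_top_iff, ← hsup]
  rw [commutator_comm, commutator_eq_bot_iff_le_centralizer] at hAB
  exact sup_le le_normalizer (hAB.trans (centralizer_le_normalizer _))

theorem Subgroup.commutator_commutator_top_le_of_sup_eq_top {A B : Subgroup W}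
    (hAB : A ⊔ B = ⊤) : ⁅⁅(⊤ : Subgroup W), A⁆, ⁅(⊤ : Subgroup W), B⁆⁆ ≤ ⁅A, B⁆ := by
  have hN := commutator_normal_of_sup_eq_top hAB
  set q := QuotientGroup.mk' ⁅A, B⁆
  have hbot : ⁅A.map q, B.map q⁆ = ⊥ := by
    rw [← map_commutator, map_eq_bot_iff, QuotientGroup.ker_mk']
  have hsup : A.map q ⊔ B.map q = ⊤ := by
    rw [← map_sup, hAB, ← MonoidHom.range_eq_map, QuotientGroup.range_mk']
  have hA := normal_of_commutator_eq_bot_of_sup_eq_top hbot hsup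
  have hB := normal_of_commutator_eq_bot_of_sup_eq_top (commutator_comm (A.map q) _ ▸ hbot)
    (sup_comm (A.map q) _ ▸ hsup)
  rw [← QuotientGroup.ker_mk' ⁅A, B⁆, ← map_eq_bot_iff, map_commutator, map_commutator,
    map_commutator, map_top_of_surjective q (QuotientGroup.mk'_surjective _), ← le_bot_iff, ← hbot]
  exact commutator_mono (commutator_le_right _ _) (commutator_le_right _ _)

end GroupTheory

section WeakCommutativity

variable {G : Type*} [Group G]

theorem chiIota1_commute_chiIota2 (g : G) : Commute (chiIota1 G g) (chiIota2 G g) := by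
  rw [← commutatorElement_eq_one_iff_commute]
  exact (QuotientGroup.eq_one_iff _).mpr (subset_normalClosure ⟨g, rfl⟩)

theorem commutatorElement_chiIota1_chiIota2_symm (g h : G) :
    ⁅chiIota1 G g, chiIota2 G h⁆ = ⁅chiIota2 G g, chiIota1 G h⁆ :=
  commutatorElement_eq_commutatorElement_of_commute (chiIota1_commute_chiIota2 g)
    (chiIota1_commute_chiIota2 h) (by simpa using chiIota1_commute_chiIota2 (g⁻¹ * h))

theorem chiG1_sup_chiG2 : chiG1 G ⊔ chiG2 G = ⊤ :=
  (Monoid.Coprod.range_eq (QuotientGroup.mk' (chiRel G))).symm.trans (QuotientGroup.range_mk' _)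

instance chiL_normal : (chiL G).Normal := by
  rw [← normalizer_eq_top_iff, eq_top_iff, ← chiG1_sup_chiG2]
  refine sup_le (le_normalizer_closure_iff.mpr ?_) (le_normalizer_closure_iff.mpr ?_) <;>
    rintro _ ⟨g, rfl⟩ _ ⟨k, rfl⟩
  · have e : chiIota1 G g * ((chiIota1 G k)⁻¹ * chiIota2 G k) * (chiIota1 G g)⁻¹ =
        ((chiIota1 G (k * g⁻¹))⁻¹ * chiIota2 G (k * g⁻¹)) *
          ((chiIota1 G g⁻¹)⁻¹ * chiIota2 G g⁻¹)⁻¹ := by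
      simp only [map_mul, map_inv]; group
    rw [e]
    exact mul_mem (subset_closure ⟨_, rfl⟩) (inv_mem (subset_closure ⟨_, rfl⟩))
  · have e : chiIota2 G g * ((chiIota1 G k)⁻¹ * chiIota2 G k) * (chiIota2 G g)⁻¹ =
        ((chiIota1 G g⁻¹)⁻¹ * chiIota2 G g⁻¹)⁻¹ *
          ((chiIota1 G (k * g⁻¹))⁻¹ * chiIota2 G (k * g⁻¹)) := by
      simp only [map_mul, map_inv]; group
    rw [e]
    exact mul_mem (inv_mem (subset_closure ⟨_, rfl⟩)) (subset_closure ⟨_, rfl⟩)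

theorem chiL1_le_chiL : chiL1 G ≤ chiL G :=
  commutator_le_left _ _

theorem chiL2_le_chiL : chiL2 G ≤ chiL G :=
  commutator_le_left _ _

theorem chiL12_le_chiD : chiL12 G ≤ chiD G :=
  (commutator_mono (commutator_mono le_top le_rfl) (commutator_mono le_top le_rfl)).trans
    (commutator_commutator_top_le_of_sup_eq_top chiG1_sup_chiG2)

theorem conj_chiIota1_eq_conj_chiIota2 (k g h : G) :
    chiIota1 G k * ⁅chiIota1 G g, chiIota2 G h⁆ * (chiIota1 G k)⁻¹ =
      chiIota2 G k * ⁅chiIota1 G g, chiIota2 G h⁆ * (chiIota2 G k)⁻¹ := by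
  rw [mul_commutatorElement_mul_inv, ← map_mul, commutatorElement_chiIota1_chiIota2_symm,
    commutatorElement_chiIota1_chiIota2_symm k, commutatorElement_chiIota1_chiIota2_symm g,
    mul_commutatorElement_mul_inv, ← map_mul]

theorem chiD_le_centralizer_chiL : chiD G ≤ centralizer (chiL G : Set (Chi G)) := by
  rw [chiL, centralizer_closure, chiD, commutator_le]
  rintro _ ⟨g, rfl⟩ _ ⟨h, rfl⟩
  refine mem_centralizer_iff.mpr ?_
  rintro _ ⟨k, rfl⟩
  calc (chiIota1 G k)⁻¹ * chiIota2 G k * ⁅chiIota1 G g, chiIota2 G h⁆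
      = (chiIota1 G k)⁻¹ * (chiIota2 G k * ⁅chiIota1 G g, chiIota2 G h⁆ * (chiIota2 G k)⁻¹) *
          chiIota2 G k := by group
    _ = ⁅chiIota1 G g, chiIota2 G h⁆ * ((chiIota1 G k)⁻¹ * chiIota2 G k) := by
      rw [← conj_chiIota1_eq_conj_chiIota2]; group

end WeakCommutativity

theorem commutator_bilinear_L1_L2 (G : Type*) [Group G]
    (a1 a2 b1 b2 : Chi G) (ha1 : a1 ∈ chiL1 G) (ha2 : a2 ∈ chiL1 G)
    (hb1 : b1 ∈ chiL2 G) (hb2 : b2 ∈ chiL2 G) :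
    ⁅a1 * a2, b1 * b2⁆ = ⁅a1, b1⁆ * ⁅a1, b2⁆ * ⁅a2, b1⁆ * ⁅a2, b2⁆ :=
  have hcentral : ⁅chiL1 G, chiL2 G⁆ ≤ centralizer (chiL1 G ⊔ chiL2 G : Subgroup (Chi G)) :=
    chiL12_le_chiD.trans
      (chiD_le_centralizer_chiL.trans (centralizer_le (sup_le chiL1_le_chiL chiL2_le_chiL)))
  commutatorElement_mul_mul_of_commutator_le_centralizer hcentral ha1 ha2 hb1 hb2
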